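/- arXiv:1904.01183 — 3 statements merged into one kernel-verified Lean document; each statement's English description precedes it below -/
import Mathlib

section
/- The von Neumann entropy S(ρ) = −Tr(ρ log ρ) is strictly concave on density matrices: for ρ₁ ≠ ρ₂ and 0 < λ < 1, S(λρ₁+(1−λ)ρ₂) > λS(ρ₁)+(1−λ)S(ρ₂). -/
open Matrix Kronecker ComplexOrder BigOperators Finset

noncomputable section

def IsDensity {d : Type*} [Fintype d] (ρ : Matrix d d ℂ) : Prop :=
  ρ.PosSemidef ∧ ρ.trace = 1

/-- Von Neumann entropy `S(ρ) = -Tr(ρ log ρ)`, computed via the eigenvalues of a Hermitian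
matrix (functional calculus), with the convention `0 log 0 = 0`. -/
def vnEntropy {d : ℕ} (ρ : Matrix (Fin d) (Fin d) ℂ) : ℝ :=
  if h : ρ.IsHermitian then -∑ i, h.eigenvalues i * Real.log (h.eigenvalues i) else 0

/-! Let `W` be a unitary diagonalising the mixture `ρ = t ρ₁ + (1 - t) ρ₂`, and let `H_W(A)` be the
Shannon entropy of the diagonal of `W A W⋆`, so that `S(ρ) = H_W(ρ)`. For positive semidefinite `A`
the diagonal of `W A W⋆` is the image of the spectrum of `A` under the doubly stochastic matrix
`|(W V)ₖⱼ|²` (`V` diagonalising `A`), so Jensen's inequality row by row gives `S(A) ≤ H_W(A)`,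
strictly unless `W A W⋆` is diagonal. Since `H_W` is concave in `A` (strictly, unless the two
diagonals agree), `t S(ρ₁) + (1 - t) S(ρ₂) ≤ t H_W(ρ₁) + (1 - t) H_W(ρ₂) ≤ H_W(ρ) = S(ρ)`, and
equality throughout would make `W ρ₁ W⋆` and `W ρ₂ W⋆` diagonal with the same diagonal. -/

open Real Unitary

section Jensen

variable {n : Type*} [Fintype n] [DecidableEq n] {s : Set ℝ} {f : ℝ → ℝ}
  {c : Matrix n n ℝ} {μ : n → ℝ}

lemma sum_eq_sum_sum_smul_of_mem_doublyStochastic (hc : c ∈ doublyStochastic ℝ n) (g : n → ℝ) :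
    ∑ j, g j = ∑ k, ∑ j, c k j • g j := by
  rw [Finset.sum_comm]
  simp_rw [smul_eq_mul, ← Finset.sum_mul, sum_col_of_mem_doublyStochastic hc, one_mul]

lemma ConcaveOn.sum_le_sum_mulVec (hf : ConcaveOn ℝ s f) (hc : c ∈ doublyStochastic ℝ n)
    (hμ : ∀ j, μ j ∈ s) : ∑ j, f (μ j) ≤ ∑ k, f ((c *ᵥ μ) k) := by
  calc ∑ j, f (μ j) = ∑ k, ∑ j, c k j • f (μ j) :=
        sum_eq_sum_sum_smul_of_mem_doublyStochastic hc _
    _ ≤ ∑ k, f ((c *ᵥ μ) k) := Finset.sum_le_sum fun k _ =>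
        hf.le_map_sum (fun j _ => nonneg_of_mem_doublyStochastic hc)
          (sum_row_of_mem_doublyStochastic hc k) (fun j _ => hμ j)

lemma StrictConcaveOn.sum_lt_sum_mulVec (hf : StrictConcaveOn ℝ s f)
    (hc : c ∈ doublyStochastic ℝ n) (hμ : ∀ j, μ j ∈ s)
    (hmix : ∃ k j j', c k j ≠ 0 ∧ c k j' ≠ 0 ∧ μ j ≠ μ j') :
    ∑ j, f (μ j) < ∑ k, f ((c *ᵥ μ) k) := by
  obtain ⟨k, j, j', hj, hj', hμj⟩ := hmix
  calc ∑ j, f (μ j) = ∑ k, ∑ j, c k j • f (μ j) :=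
        sum_eq_sum_sum_smul_of_mem_doublyStochastic hc _
    _ < ∑ k, f ((c *ᵥ μ) k) := by
      refine Finset.sum_lt_sum (fun k _ => hf.concaveOn.le_map_sum
          (fun j _ => nonneg_of_mem_doublyStochastic hc)
          (sum_row_of_mem_doublyStochastic hc k) (fun j _ => hμ j)) ⟨k, Finset.mem_univ _, ?_⟩
      exact (hf.lt_map_sum_iff_of_nonneg (fun j _ => nonneg_of_mem_doublyStochastic hc)
        (sum_row_of_mem_doublyStochastic hc k) (fun j _ => hμ j)).mpr
          ⟨j, Finset.mem_univ _, j', Finset.mem_univ _, hj, hj', hμj⟩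

lemma StrictConcaveOn.sum_pi {ι : Type*} [Fintype ι] (hf : StrictConcaveOn ℝ s f) :
    StrictConcaveOn ℝ (Set.univ.pi fun _ : ι => s) fun x => ∑ i, f (x i) := by
  refine ⟨convex_pi fun _ _ => hf.1, fun x hx y hy hxy a b ha hb hab => ?_⟩
  obtain ⟨i, hi⟩ := Function.ne_iff.mp hxy
  simp only [Set.mem_univ_pi] at hx hy
  simp only [smul_eq_mul, Finset.mul_sum, ← Finset.sum_add_distrib, Pi.add_apply, Pi.smul_apply]
  refine Finset.sum_lt_sum (fun k _ => ?_) ⟨i, Finset.mem_univ _, hf.2 (hx i) (hy i) hi ha hb hab⟩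
  exact hf.concaveOn.2 (hx k) (hy k) ha.le hb.le hab

end Jensen

namespace Matrix

variable {n : Type*} [Fintype n] [DecidableEq n]

lemma normSq_mem_doublyStochastic (U : unitaryGroup n ℂ) :
    of (fun i j => Complex.normSq (U i j)) ∈ doublyStochastic ℝ n := by
  have hrow : ∀ i, ∑ j, Complex.normSq (U i j) = 1 := fun i => by
    have := congrFun (congrFun (mem_unitaryGroup_iff.mp U.2) i) i
    simp only [mul_apply, star_apply, one_apply_eq, Complex.star_def, Complex.mul_conj] at this
    exact_mod_cast this
  have hcol : ∀ j, ∑ i, Complex.normSq (U i j) = 1 := fun j => by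
    have := congrFun (congrFun (mem_unitaryGroup_iff'.mp U.2) j) j
    simp only [mul_apply, star_apply, one_apply_eq, Complex.star_def, mul_comm (starRingEnd ℂ _),
      Complex.mul_conj] at this
    exact_mod_cast this
  exact mem_doublyStochastic_iff_sum.mpr ⟨fun i j => Complex.normSq_nonneg _, hrow, hcol⟩

lemma mul_diagonal_mul_star_apply (M : Matrix n n ℂ) (μ : n → ℝ) (k l : n) :
    (M * diagonal (Complex.ofReal ∘ μ) * star M) k l = ∑ j, M k j * μ j * star (M l j) := by
  simp [mul_apply (M := M * _), mul_diagonal]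

lemma re_mul_diagonal_mul_star_apply_self (M : Matrix n n ℂ) (μ : n → ℝ) (k : n) :
    ((M * diagonal (Complex.ofReal ∘ μ) * star M) k k).re =
      (of (fun i j => Complex.normSq (M i j)) *ᵥ μ) k := by
  simp only [mul_diagonal_mul_star_apply, Complex.re_sum, mulVec, dotProduct, of_apply]
  refine Finset.sum_congr rfl fun j _ => ?_
  simp [Complex.normSq_apply]
  ring

lemma exists_ne_of_mul_diagonal_mul_star_apply_ne_zero (U : unitaryGroup n ℂ) {μ : n → ℝ}
    {k l : n} (hkl : k ≠ l)
    (h : ((U : Matrix n n ℂ) * diagonal (Complex.ofReal ∘ μ) * star (U : Matrix n n ℂ)) k l ≠ 0) :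
    ∃ j j', U k j ≠ 0 ∧ U k j' ≠ 0 ∧ μ j ≠ μ j' := by
  by_contra! hconst
  obtain ⟨j₀, hj₀⟩ : ∃ j₀, U k j₀ ≠ 0 := by
    by_contra! hrow
    simp [mul_diagonal_mul_star_apply, hrow] at h
  have hU : ∑ j, U k j * star (U l j) = 0 := by
    simpa [mul_apply, hkl] using congrFun (congrFun (mem_unitaryGroup_iff.mp U.2) k) l
  apply h
  calc ((U : Matrix n n ℂ) * diagonal (Complex.ofReal ∘ μ) * star (U : Matrix n n ℂ)) k l
      = ∑ j, μ j₀ * (U k j * star (U l j)) := by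
        rw [mul_diagonal_mul_star_apply]
        refine Finset.sum_congr rfl fun j _ => ?_
        by_cases hj : U k j = 0
        · simp [hj]
        · rw [hconst j j₀ hj hj₀]; ring
    _ = 0 := by rw [← Finset.mul_sum, hU, mul_zero]

lemma IsHermitian.conjStarAlgAut_eq_mul_diagonal_mul_star {A : Matrix n n ℂ} (hA : A.IsHermitian)
    (W : unitaryGroup n ℂ) :
    conjStarAlgAut ℂ _ W A =
      ((W * hA.eigenvectorUnitary : unitaryGroup n ℂ) : Matrix n n ℂ) *
        diagonal (Complex.ofReal ∘ hA.eigenvalues) *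
          star ((W * hA.eigenvectorUnitary : unitaryGroup n ℂ) : Matrix n n ℂ) := by
  conv_lhs => rw [hA.spectral_theorem, ← conjStarAlgAut_mul_apply]
  rfl

variable {f : ℝ → ℝ} {A A₁ A₂ : Matrix n n ℂ}

lemma PosSemidef.sum_map_eigenvalues_le (hA : A.PosSemidef) (hf : ConcaveOn ℝ (Set.Ici 0) f)
    (W : unitaryGroup n ℂ) :
    ∑ j, f (hA.1.eigenvalues j) ≤ ∑ k, f (conjStarAlgAut ℂ _ W A k k).re := by
  simp_rw [hA.1.conjStarAlgAut_eq_mul_diagonal_mul_star, re_mul_diagonal_mul_star_apply_self]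
  exact hf.sum_le_sum_mulVec (normSq_mem_doublyStochastic _) hA.eigenvalues_nonneg

lemma PosSemidef.sum_map_eigenvalues_lt (hA : A.PosSemidef) (hf : StrictConcaveOn ℝ (Set.Ici 0) f)
    {W : unitaryGroup n ℂ} (hW : ¬ (conjStarAlgAut ℂ _ W A).IsDiag) :
    ∑ j, f (hA.1.eigenvalues j) < ∑ k, f (conjStarAlgAut ℂ _ W A k k).re := by
  obtain ⟨k, l, hkl, hne⟩ : ∃ k l, k ≠ l ∧ conjStarAlgAut ℂ _ W A k l ≠ 0 := by
    simpa [IsDiag, Pairwise] using hW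
  rw [hA.1.conjStarAlgAut_eq_mul_diagonal_mul_star] at hne
  obtain ⟨j, j', hj, hj', hμ⟩ := exists_ne_of_mul_diagonal_mul_star_apply_ne_zero _ hkl hne
  simp_rw [hA.1.conjStarAlgAut_eq_mul_diagonal_mul_star, re_mul_diagonal_mul_star_apply_self]
  exact hf.sum_lt_sum_mulVec (normSq_mem_doublyStochastic _) hA.eigenvalues_nonneg
    ⟨k, j, j', by simpa using hj, by simpa using hj', hμ⟩

lemma PosSemidef.conjStarAlgAut (hA : A.PosSemidef) (W : unitaryGroup n ℂ) :
    (conjStarAlgAut ℂ _ W A).PosSemidef :=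
  hA.mul_mul_conjTranspose_same _

lemma PosSemidef.re_conjStarAlgAut_apply_self_nonneg (hA : A.PosSemidef) (W : unitaryGroup n ℂ)
    (k : n) : 0 ≤ (Unitary.conjStarAlgAut ℂ _ W A k k).re :=
  (RCLike.nonneg_iff.mp (hA.conjStarAlgAut W).diag_nonneg).1

lemma eq_of_isDiag_conjStarAlgAut {W : unitaryGroup n ℂ} (h₁ : (conjStarAlgAut ℂ _ W A₁).IsDiag)
    (h₂ : (conjStarAlgAut ℂ _ W A₂).IsDiag)
    (hdiag : (conjStarAlgAut ℂ _ W A₁).diag = (conjStarAlgAut ℂ _ W A₂).diag) : A₁ = A₂ := by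
  apply EquivLike.injective (conjStarAlgAut ℂ _ W)
  rw [← h₁.diagonal_diag, ← h₂.diagonal_diag, hdiag]

end Matrix

open Matrix

def diagEntropy {n : Type*} [Fintype n] [DecidableEq n] (W : unitaryGroup n ℂ)
    (A : Matrix n n ℂ) : ℝ :=
  ∑ k, negMulLog (conjStarAlgAut ℂ _ W A k k).re

section diagEntropy

variable {n : Type*} [Fintype n] [DecidableEq n] {A₁ A₂ : Matrix n n ℂ} (W : unitaryGroup n ℂ)

lemma re_conjStarAlgAut_add_smul_apply_self (a b : ℝ) (k : n) :
    (conjStarAlgAut ℂ _ W ((a : ℂ) • A₁ + (b : ℂ) • A₂) k k).re =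
      a * (conjStarAlgAut ℂ _ W A₁ k k).re + b * (conjStarAlgAut ℂ _ W A₂ k k).re := by
  simp only [map_add, map_smul, Matrix.add_apply, Matrix.smul_apply, smul_eq_mul, Complex.add_re,
    Complex.re_ofReal_mul]

lemma diagEntropy_add_smul_le (hA₁ : A₁.PosSemidef) (hA₂ : A₂.PosSemidef) {t : ℝ} (ht0 : 0 ≤ t)
    (ht1 : t ≤ 1) :
    t * diagEntropy W A₁ + (1 - t) * diagEntropy W A₂ ≤
      diagEntropy W ((t : ℂ) • A₁ + ((1 - t : ℝ) : ℂ) • A₂) := by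
  have := strictConcaveOn_negMulLog.sum_pi.concaveOn.2
    (fun k _ => hA₁.re_conjStarAlgAut_apply_self_nonneg W k)
    (fun k _ => hA₂.re_conjStarAlgAut_apply_self_nonneg W k) ht0 (sub_nonneg.2 ht1)
    (add_sub_cancel t 1)
  simpa only [diagEntropy, re_conjStarAlgAut_add_smul_apply_self, smul_eq_mul, Pi.add_apply,
    Pi.smul_apply] using this

lemma diagEntropy_add_smul_lt (hA₁ : A₁.PosSemidef) (hA₂ : A₂.PosSemidef) {t : ℝ} (ht0 : 0 < t)
    (ht1 : t < 1) (hdiag : (conjStarAlgAut ℂ _ W A₁).diag ≠ (conjStarAlgAut ℂ _ W A₂).diag) :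
    t * diagEntropy W A₁ + (1 - t) * diagEntropy W A₂ <
      diagEntropy W ((t : ℂ) • A₁ + ((1 - t : ℝ) : ℂ) • A₂) := by
  have hne : (fun k => (conjStarAlgAut ℂ _ W A₁ k k).re) ≠
      fun k => (conjStarAlgAut ℂ _ W A₂ k k).re := by
    refine fun h => hdiag (funext fun k => ?_)
    rw [diag_apply, diag_apply, ← (hA₁.conjStarAlgAut W).1.coe_re_apply_self,
      ← (hA₂.conjStarAlgAut W).1.coe_re_apply_self]
    exact congrArg Complex.ofReal (congrFun h k)
  have := strictConcaveOn_negMulLog.sum_pi.2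
    (fun k _ => hA₁.re_conjStarAlgAut_apply_self_nonneg W k)
    (fun k _ => hA₂.re_conjStarAlgAut_apply_self_nonneg W k) hne ht0 (sub_pos.2 ht1)
    (add_sub_cancel t 1)
  simpa only [diagEntropy, re_conjStarAlgAut_add_smul_apply_self, smul_eq_mul, Pi.add_apply,
    Pi.smul_apply] using this

end diagEntropy

section vnEntropy

variable {d : ℕ} {A : Matrix (Fin d) (Fin d) ℂ}

lemma vnEntropy_eq_sum_negMulLog (hA : A.IsHermitian) :
    vnEntropy A = ∑ i, negMulLog (hA.eigenvalues i) := by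
  simp [vnEntropy, hA, negMulLog]

lemma diagEntropy_star_eigenvectorUnitary (hA : A.IsHermitian) :
    diagEntropy (star hA.eigenvectorUnitary) A = vnEntropy A := by
  simp [diagEntropy, hA.conjStarAlgAut_star_eigenvectorUnitary, vnEntropy_eq_sum_negMulLog hA]

lemma vnEntropy_le_diagEntropy (hA : A.PosSemidef) (W : unitaryGroup (Fin d) ℂ) :
    vnEntropy A ≤ diagEntropy W A := by
  rw [vnEntropy_eq_sum_negMulLog hA.1]
  exact hA.sum_map_eigenvalues_le concaveOn_negMulLog W

lemma vnEntropy_lt_diagEntropy (hA : A.PosSemidef) {W : unitaryGroup (Fin d) ℂ}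
    (hW : ¬ (conjStarAlgAut ℂ _ W A).IsDiag) : vnEntropy A < diagEntropy W A := by
  rw [vnEntropy_eq_sum_negMulLog hA.1]
  exact hA.sum_map_eigenvalues_lt strictConcaveOn_negMulLog hW

end vnEntropy

/-- The von Neumann entropy is strictly concave on density matrices. -/
theorem vnEntropy_strictConcave {d : ℕ} (ρ₁ ρ₂ : Matrix (Fin d) (Fin d) ℂ)
    (h1 : IsDensity ρ₁) (h2 : IsDensity ρ₂) (hne : ρ₁ ≠ ρ₂)
    (t : ℝ) (ht0 : 0 < t) (ht1 : t < 1) :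
    t * vnEntropy ρ₁ + (1 - t) * vnEntropy ρ₂ <
      vnEntropy ((t : ℂ) • ρ₁ + ((1 - t : ℝ) : ℂ) • ρ₂) := by
  set ρ := (t : ℂ) • ρ₁ + ((1 - t : ℝ) : ℂ) • ρ₂
  have hρ : ρ.PosSemidef := (h1.1.smul (by exact_mod_cast ht0.le)).add
    (h2.1.smul (by exact_mod_cast (sub_pos.2 ht1).le))
  set W := star hρ.1.eigenvectorUnitary
  have hS₁ := vnEntropy_le_diagEntropy h1.1 W
  have hS₂ := vnEntropy_le_diagEntropy h2.1 W
  have hconc := diagEntropy_add_smul_le W h1.1 h2.1 ht0.le ht1.le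
  have hstrict : vnEntropy ρ₁ < diagEntropy W ρ₁ ∨ vnEntropy ρ₂ < diagEntropy W ρ₂ ∨
      t * diagEntropy W ρ₁ + (1 - t) * diagEntropy W ρ₂ < diagEntropy W ρ := by
    by_contra! h
    refine hne (eq_of_isDiag_conjStarAlgAut (W := W) ?_ ?_ ?_)
    · by_contra hW
      exact (vnEntropy_lt_diagEntropy h1.1 hW).not_ge h.1
    · by_contra hW
      exact (vnEntropy_lt_diagEntropy h2.1 hW).not_ge h.2.1
    · by_contra hdiag
      exact (diagEntropy_add_smul_lt W h1.1 h2.1 ht0 ht1 hdiag).not_ge h.2.2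
  rw [← diagEntropy_star_eigenvectorUnitary hρ.1]
  rcases hstrict with h | h | h <;> nlinarith
end
end

section
/- The negativity does not increase under a completely positive trace-nonincreasing local map on average: if ρ^{T_A} = (1+a)ρ⁺ − aρ⁻ with ρ⁺, ρ⁻ density matrices, ρ⁺ρ⁻=0, and Φ(X) = (I⊗M) X (I⊗M†) with p = Tr Φ(ρ) > 0 and σ = Φ(ρ)/p, then N(σ) ≤ (a·Tr Φ(ρ⁻))/p, where N(σ) = (‖σ^{T_A}‖₁ − 1)/2. -/
/-! Partial transposition commutes with `Φ`, so `Φ(ρ)^{T_A} = (1 + a) Φ(ρ⁺) - a Φ(ρ⁻)` is a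
difference of positive semidefinite matrices. If `B, C ≥ 0`, every eigenvalue of `B - C` is
`⟨v, B v⟩ - ⟨v, C v⟩` for a unit eigenvector `v`, so summing `|λᵢ| ≤ ⟨vᵢ, B vᵢ⟩ + ⟨vᵢ, C vᵢ⟩` over
an orthonormal eigenbasis gives `‖B - C‖₁ ≤ Tr B + Tr C`. Together with
`p = Tr Φ(ρ)^{T_A} = (1 + a) Tr Φ(ρ⁺) - a Tr Φ(ρ⁻)` this is the bound. -/

open Matrix Kronecker ComplexOrder BigOperators Finset

noncomputable section

def ptranspose {m n : Type*} (X : Matrix (m × n) (m × n) ℂ) : Matrix (m × n) (m × n) ℂ :=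
  Matrix.of fun p q => X (q.1, p.2) (p.1, q.2)

def traceNorm {d : Type*} [Fintype d] [DecidableEq d] (A : Matrix d d ℂ) : ℝ :=
  (((Matrix.isHermitian_conjTranspose_mul_self A).eigenvectorUnitary : Matrix d d ℂ) *
    diagonal (((↑) : ℝ → ℂ) ∘ Real.sqrt ∘ (Matrix.isHermitian_conjTranspose_mul_self A).eigenvalues) *
    (star (Matrix.isHermitian_conjTranspose_mul_self A).eigenvectorUnitary : Matrix d d ℂ)).trace.re

namespace Matrix

variable {𝕜 n : Type*} [RCLike 𝕜] [Fintype n] [DecidableEq n]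

lemma IsHermitian.trace_cfc {A : Matrix n n 𝕜} (hA : A.IsHermitian) (f : ℝ → ℝ) :
    (cfc f A).trace = ∑ i, (f (hA.eigenvalues i) : 𝕜) := by
  rw [hA.cfc_eq, IsHermitian.cfc, Unitary.conjStarAlgAut_apply, trace_mul_cycle,
    Unitary.coe_star_mul_self, one_mul, trace_diagonal]
  rfl

lemma trace_eq_sum_star_dotProduct_mulVec_col (A : Matrix n n 𝕜) (U : unitary (Matrix n n 𝕜)) :
    A.trace = ∑ i, star (col (U : Matrix n n 𝕜) i) ⬝ᵥ (A *ᵥ col (U : Matrix n n 𝕜) i) := by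
  have hconj : (star (U : Matrix n n 𝕜) * A * U).trace = A.trace := by
    rw [trace_mul_cycle, Unitary.mul_star_self_of_mem U.2, one_mul]
  rw [← hconj]
  refine Finset.sum_congr rfl fun i _ ↦ ?_
  rw [diag_apply, dotProduct_mulVec, mul_apply']
  rfl

lemma sum_abs_eigenvalues_sub_le {B C : Matrix n n 𝕜} (hB : B.PosSemidef) (hC : C.PosSemidef) :
    ∑ i, |(hB.1.sub hC.1).eigenvalues i| ≤ RCLike.re B.trace + RCLike.re C.trace := by
  set hBC := hB.1.sub hC.1
  set v := hBC.eigenvectorBasis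
  have hsum (A : Matrix n n 𝕜) :
      RCLike.re A.trace = ∑ i, RCLike.re (star ⇑(v i) ⬝ᵥ (A *ᵥ ⇑(v i))) := by
    rw [trace_eq_sum_star_dotProduct_mulVec_col A hBC.eigenvectorUnitary, map_sum]
    rfl
  have heig (i : n) : hBC.eigenvalues i =
      RCLike.re (star ⇑(v i) ⬝ᵥ (B *ᵥ ⇑(v i))) - RCLike.re (star ⇑(v i) ⬝ᵥ (C *ᵥ ⇑(v i))) := by
    rw [hBC.eigenvalues_eq, sub_mulVec, dotProduct_sub, map_sub]
  rw [hsum B, hsum C, ← Finset.sum_add_distrib]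
  gcongr with i
  rw [heig, abs_le]
  constructor <;> linarith [hB.re_dotProduct_nonneg (v i), hC.re_dotProduct_nonneg (v i)]

end Matrix

section TraceNorm

variable {d : Type*} [Fintype d] [DecidableEq d]

lemma traceNorm_eq_re_trace_cfc_sqrt (A : Matrix d d ℂ) :
    traceNorm A = (cfc Real.sqrt (Aᴴ * A)).trace.re := by
  rw [(isHermitian_conjTranspose_mul_self A).cfc_eq, IsHermitian.cfc, Unitary.conjStarAlgAut_apply]
  rfl

lemma Matrix.IsHermitian.traceNorm_eq_sum_abs_eigenvalues {A : Matrix d d ℂ} (hA : A.IsHermitian) :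
    traceNorm A = ∑ i, |hA.eigenvalues i| := by
  have hsqrt : cfc Real.sqrt (Aᴴ * A) = cfc (fun x : ℝ ↦ |x|) A := by
    rw [hA.eq, ← sq, ← cfc_comp_pow Real.sqrt 2 A]
    simp only [Real.sqrt_sq_eq_abs]
  rw [traceNorm_eq_re_trace_cfc_sqrt, hsqrt, hA.trace_cfc, Complex.re_sum]
  simp

lemma traceNorm_sub_le {B C : Matrix d d ℂ} (hB : B.PosSemidef) (hC : C.PosSemidef) :
    traceNorm (B - C) ≤ B.trace.re + C.trace.re := by
  rw [(hB.1.sub hC.1).traceNorm_eq_sum_abs_eigenvalues]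
  exact sum_abs_eigenvalues_sub_le hB hC

lemma traceNorm_smul_sub_smul_le {B C : Matrix d d ℂ} (hB : B.PosSemidef) (hC : C.PosSemidef)
    {r s : ℝ} (hr : 0 ≤ r) (hs : 0 ≤ s) :
    traceNorm ((r : ℂ) • B - (s : ℂ) • C) ≤ r * B.trace.re + s * C.trace.re := by
  have h := traceNorm_sub_le (hB.smul (Complex.zero_le_real.mpr hr))
    (hC.smul (Complex.zero_le_real.mpr hs))
  rwa [trace_smul, trace_smul, smul_eq_mul, smul_eq_mul, Complex.re_ofReal_mul,
    Complex.re_ofReal_mul] at h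

end TraceNorm

section PartialTranspose

variable {m n : Type*}

lemma trace_ptranspose [Fintype m] [Fintype n] (X : Matrix (m × n) (m × n) ℂ) :
    (ptranspose X).trace = X.trace := rfl

lemma ptranspose_smul (c : ℂ) (X : Matrix (m × n) (m × n) ℂ) :
    ptranspose (c • X) = c • ptranspose X := rfl

variable [Fintype m] [Fintype n] [DecidableEq m]

lemma ptranspose_one_kronecker_mul (M : Matrix n n ℂ) (X : Matrix (m × n) (m × n) ℂ) :
    ptranspose (((1 : Matrix m m ℂ) ⊗ₖ M) * X) = ((1 : Matrix m m ℂ) ⊗ₖ M) * ptranspose X := by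
  ext ⟨i, k⟩ ⟨j, l⟩
  simp [ptranspose, mul_apply, Fintype.sum_prod_type, one_apply]

lemma ptranspose_mul_one_kronecker (M : Matrix n n ℂ) (X : Matrix (m × n) (m × n) ℂ) :
    ptranspose (X * ((1 : Matrix m m ℂ) ⊗ₖ M)) = ptranspose X * ((1 : Matrix m m ℂ) ⊗ₖ M) := by
  ext ⟨i, k⟩ ⟨j, l⟩
  simp [ptranspose, mul_apply, Fintype.sum_prod_type, one_apply]

end PartialTranspose

theorem negativity_le_under_local_map_general {m n : ℕ}
    (ρ ρp ρm : Matrix (Fin m × Fin n) (Fin m × Fin n) ℂ) (a : ℝ)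
    (M : Matrix (Fin n) (Fin n) ℂ)
    (hρp : IsDensity ρp) (hρm : IsDensity ρm) (ha : 0 ≤ a)
    (hdec : ptranspose ρ = ((1 + a : ℝ) : ℂ) • ρp - ((a : ℝ) : ℂ) • ρm)
    (Φ : Matrix (Fin m × Fin n) (Fin m × Fin n) ℂ → Matrix (Fin m × Fin n) (Fin m × Fin n) ℂ)
    (hΦ : ∀ X, Φ X = ((1 : Matrix (Fin m) (Fin m) ℂ) ⊗ₖ M) * X *
        ((1 : Matrix (Fin m) (Fin m) ℂ) ⊗ₖ Mᴴ))
    (p : ℝ) (hp : p = (Φ ρ).trace.re) (hppos : 0 < p)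
    (σ : Matrix (Fin m × Fin n) (Fin m × Fin n) ℂ) (hσ : σ = ((p : ℂ))⁻¹ • Φ ρ) :
    (traceNorm (ptranspose σ) - 1) / 2 ≤ a * (Φ ρm).trace.re / p := by
  have hΦpsd {X} (hX : X.PosSemidef) : (Φ X).PosSemidef := by
    rw [hΦ, ← conjTranspose_one, ← conjTranspose_kronecker, conjTranspose_one]
    exact hX.mul_mul_conjTranspose_same _
  have hΦpt : ptranspose (Φ ρ) = ((1 + a : ℝ) : ℂ) • Φ ρp - ((a : ℝ) : ℂ) • Φ ρm := by
    simp only [hΦ, ptranspose_mul_one_kronecker, ptranspose_one_kronecker_mul, hdec,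
      Matrix.mul_sub, Matrix.sub_mul, Matrix.mul_smul, Matrix.smul_mul]
  have hp_eq : p = (1 + a) * (Φ ρp).trace.re - a * (Φ ρm).trace.re := by
    rw [hp, ← trace_ptranspose, hΦpt, trace_sub, trace_smul, trace_smul]
    simp
  have hσpt : ptranspose σ =
      ((p⁻¹ * (1 + a) : ℝ) : ℂ) • Φ ρp - ((p⁻¹ * a : ℝ) : ℂ) • Φ ρm := by
    rw [hσ, ptranspose_smul, hΦpt, smul_sub, smul_smul, smul_smul, Complex.ofReal_mul,
      Complex.ofReal_mul, Complex.ofReal_inv]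
  calc (traceNorm (ptranspose σ) - 1) / 2
      ≤ (p⁻¹ * (1 + a) * (Φ ρp).trace.re + p⁻¹ * a * (Φ ρm).trace.re - 1) / 2 := by
        gcongr
        rw [hσpt]
        exact traceNorm_smul_sub_smul_le (hΦpsd hρp.1) (hΦpsd hρm.1)
          (by positivity) (by positivity)
    _ = a * (Φ ρm).trace.re / p := by
        rw [hp_eq] at hppos ⊢
        field_simp
        ring

/-- The negativity does not increase on average under a completely positive
trace-nonincreasing local map `Φ(X) = (I⊗M) X (I⊗M†)`:
`N(σ) ≤ a · Tr Φ(ρ⁻) / p` for `σ = Φ(ρ)/p`, `p = Tr Φ(ρ)`. -/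
theorem negativity_le_under_local_map {m n : ℕ}
    (ρ ρp ρm : Matrix (Fin m × Fin n) (Fin m × Fin n) ℂ) (a : ℝ)
    (M : Matrix (Fin n) (Fin n) ℂ)
    (hρ : IsDensity ρ) (hρp : IsDensity ρp) (hρm : IsDensity ρm) (ha : 0 ≤ a)
    (hdec : ptranspose ρ = ((1 + a : ℝ) : ℂ) • ρp - ((a : ℝ) : ℂ) • ρm)
    (horth : ρp * ρm = 0)
    (hM : ((1 : Matrix (Fin n) (Fin n) ℂ) - Mᴴ * M).PosSemidef)
    (Φ : Matrix (Fin m × Fin n) (Fin m × Fin n) ℂ → Matrix (Fin m × Fin n) (Fin m × Fin n) ℂ)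
    (hΦ : ∀ X, Φ X = ((1 : Matrix (Fin m) (Fin m) ℂ) ⊗ₖ M) * X *
        ((1 : Matrix (Fin m) (Fin m) ℂ) ⊗ₖ Mᴴ))
    (p : ℝ) (hp : p = (Φ ρ).trace.re) (hppos : 0 < p)
    (σ : Matrix (Fin m × Fin n) (Fin m × Fin n) ℂ) (hσ : σ = ((p : ℂ))⁻¹ • Φ ρ) :
    (traceNorm (ptranspose σ) - 1) / 2 ≤ a * (Φ ρm).trace.re / p :=
  negativity_le_under_local_map_general ρ ρp ρm a M hρp hρm ha hdec Φ hΦ p hp hppos σ hσ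
end
end

section
/- Convex roof monotonicity transfer: let E be a nonnegative function on states and E_F its convex roof. Suppose for every pure state |η⟩ and a fixed family of maps {Φ_k}, E(|η⟩⟨η|) ≥ ∑_k t_k E_F(Φ_k(|η⟩⟨η|)/t_k) with t_k = Tr Φ_k(|η⟩⟨η|). Then for every mixed state ρ, E_F(ρ) ≥ ∑_k p_k E_F(Φ_k(ρ)/p_k), p_k = Tr Φ_k(ρ). -/
open Matrix Kronecker ComplexOrder BigOperators Finset

noncomputable section

/-- A pure state is a rank-one projection `|ψ⟩⟨ψ|` onto a unit vector. -/
def IsPure {d : Type*} [Fintype d] (ρ : Matrix d d ℂ) : Prop :=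
  ∃ ψ : d → ℂ, star ψ ⬝ᵥ ψ = 1 ∧ ρ = Matrix.vecMulVec ψ (star ψ)

/-!
Take an optimal decomposition `ρ = ∑ t_j η_j`. The trace perspective `X ↦ tr X · E_F (X / tr X)`
of the convex function `E_F` is sublinear on positive matrices with positive trace: for
`X = ∑ t_j X_j`, the state `X / tr X` is the convex combination of the states `X_j / tr X_j` with
weights `t_j tr X_j / tr X`. Applying this to `Φ_k ρ = ∑ t_j Φ_k η_j`, summing over `k` and using the
pure-state inequality for each `η_j` bounds the left side by `∑ t_j E η_j = E_F ρ`.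
-/

theorem IsPure.isDensity {n : Type*} [Fintype n] {ρ : Matrix n n ℂ} (h : IsPure ρ) :
    IsDensity ρ := by
  obtain ⟨ψ, hψ, rfl⟩ := h
  exact ⟨posSemidef_vecMulVec_self_star ψ, by rw [trace_vecMulVec, dotProduct_comm, hψ]⟩

theorem Matrix.PosSemidef.trace_eq_re {n : Type*} [Fintype n] {X : Matrix n n ℂ}
    (hX : X.PosSemidef) : X.trace = (X.trace.re : ℂ) :=
  Complex.eq_re_of_ofReal_le (r := 0) (by simpa using hX.trace_nonneg)

theorem isDensity_inv_trace_smul {n : Type*} [Fintype n] {X : Matrix n n ℂ}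
    (hX : X.PosSemidef) (htr : 0 < X.trace.re) : IsDensity (X.trace⁻¹ • X) := by
  have hne : X.trace ≠ 0 := fun h => by simp [h] at htr
  refine ⟨hX.smul ?_, by rw [trace_smul, smul_eq_mul, inv_mul_cancel₀ hne]⟩
  rw [hX.trace_eq_re, ← Complex.ofReal_inv]
  exact Complex.zero_le_real.2 (inv_nonneg.2 htr.le)

theorem trace_sum_smul_of_posSemidef {n ι : Type*} [Fintype n] [Fintype ι]
    {X : ι → Matrix n n ℂ} (hX : ∀ i, (X i).PosSemidef) (t : ι → ℝ) :
    (∑ i, (t i : ℂ) • X i).trace = ((∑ i, t i * (X i).trace.re : ℝ) : ℂ) := by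
  simp only [trace_sum, trace_smul, smul_eq_mul, Complex.ofReal_sum, Complex.ofReal_mul,
    ← (hX _).trace_eq_re]

theorem inv_trace_smul_sum_smul_eq {n ι : Type*} [Fintype n] [Fintype ι]
    {X : ι → Matrix n n ℂ} (hX : ∀ i, (X i).PosSemidef) (hXtr : ∀ i, 0 < (X i).trace.re)
    (t : ι → ℝ) :
    (∑ i, (t i : ℂ) • X i).trace⁻¹ • ∑ i, (t i : ℂ) • X i =
      ∑ i, ((t i * (X i).trace.re / ∑ j, t j * (X j).trace.re : ℝ) : ℂ) •
        ((X i).trace⁻¹ • X i) := by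
  rw [trace_sum_smul_of_posSemidef hX, smul_sum]
  refine sum_congr rfl fun i _ => ?_
  rw [smul_smul, smul_smul]
  congr 1
  nth_rw 2 [(hX i).trace_eq_re]
  have hq : (X i).trace.re ≠ 0 := (hXtr i).ne'
  push_cast
  field_simp

def tracePerspective {n : Type*} [Fintype n] (f : Matrix n n ℂ → ℝ) (X : Matrix n n ℂ) : ℝ :=
  X.trace.re * f (X.trace⁻¹ • X)

theorem tracePerspective_sum_le {n ι : Type*} [Fintype n] [Fintype ι] {f : Matrix n n ℂ → ℝ}
    (hf : ∀ (w : ι → ℝ) (τ : ι → Matrix n n ℂ), (∀ i, 0 ≤ w i) → ∑ i, w i = 1 →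
      (∀ i, IsDensity (τ i)) → f (∑ i, (w i : ℂ) • τ i) ≤ ∑ i, w i * f (τ i))
    {X : ι → Matrix n n ℂ} (hX : ∀ i, (X i).PosSemidef) (hXtr : ∀ i, 0 < (X i).trace.re)
    {t : ι → ℝ} (ht : ∀ i, 0 ≤ t i) :
    tracePerspective f (∑ i, (t i : ℂ) • X i) ≤ ∑ i, t i * tracePerspective f (X i) := by
  set p := ∑ i, t i * (X i).trace.re
  have hterm : ∀ i, 0 ≤ t i * (X i).trace.re := fun i => mul_nonneg (ht i) (hXtr i).le
  have hp : 0 ≤ p := sum_nonneg fun i _ => hterm i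
  rcases hp.eq_or_lt with hp | hp
  · have ht0 : ∀ i, t i = 0 := fun i =>
      (mul_eq_zero.1 ((sum_eq_zero_iff_of_nonneg fun i _ => hterm i).1 hp.symm i
        (mem_univ i))).resolve_right (hXtr i).ne'
    simp [tracePerspective, ht0]
  · have hw : ∑ i, t i * (X i).trace.re / p = 1 := by rw [← sum_div, div_self hp.ne']
    calc tracePerspective f (∑ i, (t i : ℂ) • X i)
        = p * f (∑ i, ((t i * (X i).trace.re / p : ℝ) : ℂ) • ((X i).trace⁻¹ • X i)) := by
          rw [tracePerspective, inv_trace_smul_sum_smul_eq hX hXtr, trace_sum_smul_of_posSemidef hX,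
            Complex.ofReal_re]
      _ ≤ p * ∑ i, t i * (X i).trace.re / p * f ((X i).trace⁻¹ • X i) := by
          gcongr
          exact hf _ _ (fun i => div_nonneg (hterm i) hp.le) hw
            fun i => isDensity_inv_trace_smul (hX i) (hXtr i)
      _ = ∑ i, t i * tracePerspective f (X i) := by
          rw [mul_sum]
          refine sum_congr rfl fun i _ => ?_
          rw [tracePerspective]
          field_simp

theorem convexRoof_monotonicity_transfer_general {d K : ℕ}
    (E EF : Matrix (Fin d) (Fin d) ℂ → ℝ)
    -- the convex roof minimum is attained by some optimal pure-state decomposition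
    (hopt : ∀ ρ, IsDensity ρ → ∃ (J : ℕ) (t : Fin J → ℝ)
        (η : Fin J → Matrix (Fin d) (Fin d) ℂ),
      (∀ j, 0 ≤ t j) ∧ (∑ j, t j = 1) ∧ (∀ j, IsPure (η j)) ∧
      ρ = (∑ j, ((t j : ℝ) : ℂ) • η j) ∧ EF ρ = ∑ j, t j * E (η j))
    -- convexity of the convex roof
    (hconv : ∀ (J : ℕ) (w : Fin J → ℝ) (τ : Fin J → Matrix (Fin d) (Fin d) ℂ),
      (∀ j, 0 ≤ w j) → (∑ j, w j = 1) → (∀ j, IsDensity (τ j)) →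
      EF (∑ j, ((w j : ℝ) : ℂ) • τ j) ≤ ∑ j, w j * EF (τ j))
    (Φ : Fin K → (Matrix (Fin d) (Fin d) ℂ →ₗ[ℂ] Matrix (Fin d) (Fin d) ℂ))
    (hΦpos : ∀ k (X : Matrix (Fin d) (Fin d) ℂ), X.PosSemidef → (Φ k X).PosSemidef)
    (hΦppos : ∀ k, ∀ ρ, IsDensity ρ → 0 < ((Φ k) ρ).trace.re)
    -- the average monotonicity inequality on pure states
    (hpure : ∀ η, IsPure η →
      (∑ k, ((Φ k) η).trace.re * EF ((((Φ k) η).trace)⁻¹ • (Φ k) η)) ≤ E η)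
    (ρ : Matrix (Fin d) (Fin d) ℂ) (hρ : IsDensity ρ) :
    (∑ k, ((Φ k) ρ).trace.re * EF ((((Φ k) ρ).trace)⁻¹ • (Φ k) ρ)) ≤ EF ρ := by
  obtain ⟨J, t, η, ht, -, hη, rfl, hEF⟩ := hopt ρ hρ
  have hηd : ∀ j, IsDensity (η j) := fun j => (hη j).isDensity
  calc ∑ k, tracePerspective EF (Φ k (∑ j, (t j : ℂ) • η j))
      = ∑ k, tracePerspective EF (∑ j, (t j : ℂ) • Φ k (η j)) := by simp only [map_sum, map_smul]
    _ ≤ ∑ k, ∑ j, t j * tracePerspective EF (Φ k (η j)) := by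
        gcongr with k
        exact tracePerspective_sum_le (hconv J) (fun j => hΦpos k _ (hηd j).1)
          (fun j => hΦppos k _ (hηd j)) ht
    _ = ∑ j, t j * ∑ k, tracePerspective EF (Φ k (η j)) := by
        rw [sum_comm]
        simp only [mul_sum]
    _ ≤ ∑ j, t j * E (η j) := by
        gcongr with j
        · exact ht j
        · exact hpure _ (hη j)
    _ = EF (∑ j, (t j : ℂ) • η j) := hEF.symm

/-- Convex roof monotonicity transfer: if the average monotonicity inequality holds for every
pure state, then it holds for the convex roof `E_F` on every mixed state. -/
theorem convexRoof_monotonicity_transfer {d K : ℕ}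
    (E EF : Matrix (Fin d) (Fin d) ℂ → ℝ)
    (hE0 : ∀ ρ, 0 ≤ E ρ) (hEF0 : ∀ ρ, 0 ≤ EF ρ)
    -- the convex roof minimum is attained by some optimal pure-state decomposition
    (hopt : ∀ ρ, IsDensity ρ → ∃ (J : ℕ) (t : Fin J → ℝ)
        (η : Fin J → Matrix (Fin d) (Fin d) ℂ),
      (∀ j, 0 ≤ t j) ∧ (∑ j, t j = 1) ∧ (∀ j, IsPure (η j)) ∧
      ρ = (∑ j, ((t j : ℝ) : ℂ) • η j) ∧ EF ρ = ∑ j, t j * E (η j))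
    -- the convex roof is a lower bound over all pure-state decompositions
    (hlb : ∀ ρ, IsDensity ρ → ∀ (J : ℕ) (t : Fin J → ℝ)
        (η : Fin J → Matrix (Fin d) (Fin d) ℂ),
      (∀ j, 0 ≤ t j) → (∑ j, t j = 1) → (∀ j, IsPure (η j)) →
      ρ = (∑ j, ((t j : ℝ) : ℂ) • η j) → EF ρ ≤ ∑ j, t j * E (η j))
    -- convexity of the convex roof
    (hconv : ∀ (J : ℕ) (w : Fin J → ℝ) (τ : Fin J → Matrix (Fin d) (Fin d) ℂ),
      (∀ j, 0 ≤ w j) → (∑ j, w j = 1) → (∀ j, IsDensity (τ j)) →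
      EF (∑ j, ((w j : ℝ) : ℂ) • τ j) ≤ ∑ j, w j * EF (τ j))
    (Φ : Fin K → (Matrix (Fin d) (Fin d) ℂ →ₗ[ℂ] Matrix (Fin d) (Fin d) ℂ))
    (hΦpos : ∀ k (X : Matrix (Fin d) (Fin d) ℂ), X.PosSemidef → (Φ k X).PosSemidef)
    (hΦtr : ∀ X : Matrix (Fin d) (Fin d) ℂ, (∑ k, (Φ k X).trace) = X.trace)
    (hΦppos : ∀ k, ∀ ρ, IsDensity ρ → 0 < ((Φ k) ρ).trace.re)
    -- the average monotonicity inequality on pure states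
    (hpure : ∀ η, IsPure η →
      (∑ k, ((Φ k) η).trace.re * EF ((((Φ k) η).trace)⁻¹ • (Φ k) η)) ≤ E η)
    (ρ : Matrix (Fin d) (Fin d) ℂ) (hρ : IsDensity ρ) :
    (∑ k, ((Φ k) ρ).trace.re * EF ((((Φ k) ρ).trace)⁻¹ • (Φ k) ρ)) ≤ EF ρ :=
  convexRoof_monotonicity_transfer_general E EF hopt hconv Φ hΦpos hΦppos hpure ρ hρ
end
end
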